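/- Cocartesian structure of the Grothendieck construction of an extensive indexed category: if L : C^op → Cat is an extensive strictly indexed category with C having finite coproducts and each fibre L(W) having an initial object 0, then Σ_C L has initial object (0, 0) and binary coproducts given by (W, w) ⊔ (X, x) = (W ⊔ X, ε^{(W,X)}(w, x)), and these coproducts are preserved on the nose by the projection to C. -/

import Mathlib

universe w₂ w₁ v u

open CategoryTheory CategoryTheory.Limits Opposite

namespace CHAD

variable {C : Type u} [Category.{v} C]

/-- The total category (Grothendieck construction) `Σ_C L` of a strictly indexed category
`L : Cᵒᵖ ⥤ Cat`. -/
structure Total (L : Cᵒᵖ ⥤ Cat.{w₂, w₁}) where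
  base : C
  fib : L.obj (op base)

namespace Total

variable {L : Cᵒᵖ ⥤ Cat.{w₂, w₁}}

/-- A morphism `(W, w) ⟶ (X, x)` in `Σ_C L` is a pair `(f : W ⟶ X, f̄ : w ⟶ L(f)(x))`. -/
structure Hom (X Y : Total L) where
  base : X.base ⟶ Y.base
  fib : X.fib ⟶ (L.map base.op).toFunctor.obj Y.fib

theorem Hom.ext' {X Y : Total L} (f g : Hom X Y) (w_base : f.base = g.base)
    (w_fib : f.fib ≫ eqToHom (by rw [w_base]) = g.fib) : f = g := by
  cases f; cases g
  dsimp at w_base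
  subst w_base
  simpa using w_fib

/-- Identity morphism. -/
def id (X : Total L) : Hom X X where
  base := 𝟙 X.base
  fib := eqToHom (by simp)

/-- Composition of morphisms. -/
def comp {X Y Z : Total L} (f : Hom X Y) (g : Hom Y Z) : Hom X Z where
  base := f.base ≫ g.base
  fib := f.fib ≫ (L.map f.base.op).toFunctor.map g.fib ≫ eqToHom (by rw [op_comp, Functor.map_comp]; rfl)

attribute [local simp] eqToHom_map

instance : Category (Total L) where
  Hom X Y := Total.Hom X Y
  id X := Total.id X
  comp f g := Total.comp f g
  id_comp f := by
    refine Hom.ext' _ _ (by simp [comp, id]) ?_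
    dsimp [comp, id]
    rw [Functor.congr_hom (congrArg Cat.Hom.toFunctor (L.map_id (op _))) f.fib]
    simp
    have aux : ∀ {D : Type w₁} [Category.{w₂} D] {A B B1 B2 : D} (a : A ⟶ B) (p : B = B1)
        (q : B1 = B2) (r : B2 = B), a ≫ eqToHom p ≫ eqToHom q ≫ eqToHom r = a := by
      intros; subst_vars; simp
    exact aux _ _ _ _
  comp_id f := by
    refine Hom.ext' _ _ (by simp [comp, id]) ?_
    dsimp [comp, id]
    simp
    have aux : ∀ {D : Type w₁} [Category.{w₂} D] {A B B1 B2 : D} (a : A ⟶ B) (p : B = B1)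
        (q : B1 = B2) (r : B2 = B), a ≫ eqToHom p ≫ eqToHom q ≫ eqToHom r = a := by
      intros; subst_vars; simp
    exact aux _ _ _ _
  assoc f g h := by
    refine Hom.ext' _ _ (by simp [comp, id]) ?_
    dsimp [comp]
    simp [Functor.congr_hom (congrArg Cat.Hom.toFunctor (L.map_comp _ _)) h.fib]
    have aux : ∀ {D : Type w₁} [Category.{w₂} D] {A B B1 B2 B3 B4 : D} (a : A ⟶ B) (p : B = B1)
        (q : B1 = B2) (r : B2 = B3) (p' : B = B4) (q' : B4 = B3),
        ((a ≫ eqToHom p) ≫ eqToHom q) ≫ eqToHom r = (a ≫ eqToHom p') ≫ eqToHom q' := by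
      intros; subst_vars; simp
    simp only [← Category.assoc]
    exact aux _ _ _ _ _ _

variable (L)

/-- The projection functor `Σ_C L ⥤ C`. -/
def proj : Total L ⥤ C where
  obj X := X.base
  map f := f.base
  map_id _ := rfl
  map_comp _ _ := rfl

end Total

end CHAD

/-!
Cocartesian structure of the Grothendieck construction of an extensive indexed category: if
`L : Cᵒᵖ ⥤ Cat` is an extensive strictly indexed category, `C` has finite coproducts and each
fibre `L(W)` has an initial object `0`, then `Σ_C L` has initial object `(0, 0)` and binary
coproducts `(W, w) ⊔ (X, x) = (W ⊔ X, ε^{(W,X)}(w, x))`, and these coproducts are preserved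
on the nose by the projection to `C`.
-/

namespace CHAD

open CategoryTheory CategoryTheory.Limits Opposite

variable {C : Type u} [Category.{v} C] [HasInitial C] [HasBinaryCoproducts C]
variable (L : Cᵒᵖ ⥤ Cat.{w₂, w₁}) [∀ X : Cᵒᵖ, HasInitial (L.obj X)]

/-- The canonical pairing functor `(L(ι_W), L(ι_X)) : L(W ⊔ X) ⥤ L(W) × L(X)`. -/
noncomputable def pairing (W X : C) : (L.obj (op (W ⨿ X))) ⥤ (↑(L.obj (op W)) × ↑(L.obj (op X))) :=
  Functor.prod' (L.map (coprod.inl : W ⟶ W ⨿ X).op).toFunctor (L.map (coprod.inr : X ⟶ W ⨿ X).op).toFunctor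

variable (ε : ∀ W X : C, (↑(L.obj (op W)) × ↑(L.obj (op X))) ⥤ L.obj (op (W ⨿ X)))

/-- The candidate initial object `(0, 0)` of `Σ_C L`. -/
noncomputable def initObj : Total L :=
  ⟨⊥_ C, ⊥_ (L.obj (op (⊥_ C)))⟩

/-- The candidate binary coproduct `(W ⊔ X, ε^{(W,X)}(w, x))` of `(W, w)` and `(X, x)`. -/
noncomputable def coprodObj (W X : Total L) : Total L :=
  ⟨W.base ⨿ X.base, (ε W.base X.base).obj ⟨W.fib, X.fib⟩⟩

section

variable (hε₁ : ∀ W X : C, ε W X ⋙ pairing L W X = 𝟭 (↑(L.obj (op W)) × ↑(L.obj (op X))))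

/-- The first coproduct coprojection in `Σ_C L`. -/
noncomputable def coprodInl (W X : Total L) : W ⟶ coprodObj L ε W X :=
  ⟨coprod.inl,
    eqToHom (congrArg Prod.fst
      (Functor.congr_obj (hε₁ W.base X.base) ⟨W.fib, X.fib⟩)).symm⟩

/-- The second coproduct coprojection in `Σ_C L`. -/
noncomputable def coprodInr (W X : Total L) : X ⟶ coprodObj L ε W X :=
  ⟨coprod.inr,
    eqToHom (congrArg Prod.snd
      (Functor.congr_obj (hε₁ W.base X.base) ⟨W.fib, X.fib⟩)).symm⟩

end

end CHAD

/-!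
A morphism out of `(⊥, ⊥)` is a pair of morphisms out of initial objects, hence unique.
A morphism `(W ⊔ X, ε(w, x)) ⟶ (T, t)` is a map `d : W ⊔ X ⟶ T` together with a fibre map
`ε(w, x) ⟶ L(d)(t)`. Since `ε` is inverse to `(L(ι_W), L(ι_X))`, such a fibre map is the same
as a pair `w ⟶ L(d ∘ ι_W)(t)`, `x ⟶ L(d ∘ ι_X)(t)`; together with the universal property of
`W ⊔ X` this makes such morphisms exactly the pairs of morphisms out of `(W, w)` and `(X, x)`.
The projection sends these cofans to the chosen coproduct cofans of `C`.
-/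

namespace CHAD

variable {C : Type u} [Category.{v} C]

namespace Total

variable {L : Cᵒᵖ ⥤ Cat.{w₂, w₁}}

theorem comp_base {A B D : Total L} (f : A ⟶ B) (g : B ⟶ D) :
    Hom.base (f ≫ g) = Hom.base f ≫ Hom.base g := rfl

theorem comp_fib {A B D : Total L} (f : A ⟶ B) (g : B ⟶ D) :
    Hom.fib (f ≫ g) =
      Hom.fib f ≫ (L.map (Hom.base f).op).toFunctor.map (Hom.fib g) ≫
        eqToHom (by rw [comp_base, op_comp, Functor.map_comp]; rfl) := rfl

theorem Hom.congr_fib {A B : Total L} {f g : A ⟶ B} (h : f = g) :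
    Hom.fib f ≫ eqToHom (by rw [h]) = Hom.fib g := by
  subst h; simp

theorem map_fib_eq_of_comp_eq {A B T : Total L} (i : A ⟶ B) [Epi i.fib] {d : B.base ⟶ T.base}
    {u v : B.fib ⟶ (L.map d.op).toFunctor.obj T.fib}
    (e : i ≫ (⟨d, u⟩ : B ⟶ T) = i ≫ ⟨d, v⟩) :
    (L.map i.base.op).toFunctor.map u = (L.map i.base.op).toFunctor.map v := by
  have h := Hom.congr_fib e
  simp only [comp_fib, Category.assoc, eqToHom_trans] at h
  exact (cancel_mono _).1 ((cancel_epi _).1 h)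

def isInitialMk {B : C} (hB : IsInitial B) {b : L.obj (op B)} (hb : IsInitial b) :
    IsInitial (⟨B, b⟩ : Total L) :=
  IsInitial.ofUniqueHom (fun Y => ⟨hB.to Y.base, hb.to _⟩)
    (fun _ _ => Hom.ext' _ _ (hB.hom_ext _ _) (hb.hom_ext _ _))

end Total

/-- The shape of the fibre part of `coprodInl ≫ coprodDesc` and `coprodInr ≫ coprodDesc`, with
every transport abstracted so that `subst` can eliminate it. -/
theorem eqToHom_comp_map_comp_eqToHom {D E : Type*} [Category D] [Category E] (F : D ⥤ E)
    {a b c : D} {A B B' : E} (x : a ⟶ b) (e : b = c) (φ : A ⟶ B) (r : B = B')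
    (s : F.obj a = A) (t : B' = F.obj b) (hx : F.map x = eqToHom s ≫ (φ ≫ eqToHom r) ≫ eqToHom t)
    (p : A = F.obj a) (q : F.obj c = B) :
    eqToHom p ≫ F.map (x ≫ eqToHom e) ≫ eqToHom q = φ := by
  subst e r s
  simp [hx]

theorem map_comp_obj (L : Cᵒᵖ ⥤ Cat.{w₂, w₁}) {X Y Z : C} (f : X ⟶ Y) (g : Y ⟶ Z)
    (t : L.obj (op Z)) :
    (L.map (f ≫ g).op).toFunctor.obj t = (L.map f.op).toFunctor.obj ((L.map g.op).toFunctor.obj t) := by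
  rw [op_comp, L.map_comp]; rfl

section Coproducts

variable [HasBinaryCoproducts C] (L : Cᵒᵖ ⥤ Cat.{w₂, w₁})
variable (ε : ∀ W X : C, (↑(L.obj (op W)) × ↑(L.obj (op X))) ⥤ L.obj (op (W ⨿ X)))
variable (hε₁ : ∀ W X : C, ε W X ⋙ pairing L W X = 𝟭 (↑(L.obj (op W)) × ↑(L.obj (op X))))
variable (hε₂ : ∀ W X : C, pairing L W X ⋙ ε W X = 𝟭 (L.obj (op (W ⨿ X))))

theorem map_inl_ε_map {W X : C} {a b : ↑(L.obj (op W)) × ↑(L.obj (op X))} (u : a ⟶ b) :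
    (L.map (coprod.inl : W ⟶ W ⨿ X).op).toFunctor.map ((ε W X).map u) =
      eqToHom (congrArg Prod.fst (Functor.congr_obj (hε₁ W X) a)) ≫ u.1 ≫
        eqToHom (congrArg Prod.fst (Functor.congr_obj (hε₁ W X) b)).symm := by
  have h := congrArg Prod.fst (Functor.congr_hom (hε₁ W X) u)
  simp only [Functor.comp_map, Functor.id_map, prod_comp, eqToHom_fst] at h
  exact h

theorem map_inr_ε_map {W X : C} {a b : ↑(L.obj (op W)) × ↑(L.obj (op X))} (u : a ⟶ b) :
    (L.map (coprod.inr : X ⟶ W ⨿ X).op).toFunctor.map ((ε W X).map u) =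
      eqToHom (congrArg Prod.snd (Functor.congr_obj (hε₁ W X) a)) ≫ u.2 ≫
        eqToHom (congrArg Prod.snd (Functor.congr_obj (hε₁ W X) b)).symm := by
  have h := congrArg Prod.snd (Functor.congr_hom (hε₁ W X) u)
  simp only [Functor.comp_map, Functor.id_map, prod_comp, eqToHom_snd] at h
  exact h

noncomputable def coprodDesc {W X T : Total L} (f : W ⟶ T) (g : X ⟶ T) :
    coprodObj L ε W X ⟶ T where
  base := coprod.desc f.base g.base
  fib := (ε W.base X.base).map
      (show (⟨W.fib, X.fib⟩ : ↑(L.obj (op W.base)) × ↑(L.obj (op X.base))) ⟶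
          (pairing L W.base X.base).obj ((L.map (coprod.desc f.base g.base).op).toFunctor.obj T.fib)
        from ⟨f.fib ≫ eqToHom (by dsimp [pairing]; rw [← map_comp_obj, coprod.inl_desc]),
          g.fib ≫ eqToHom (by dsimp [pairing]; rw [← map_comp_obj, coprod.inr_desc])⟩)
    ≫ eqToHom (Functor.congr_obj (hε₂ W.base X.base) _)

theorem coprodInl_coprodDesc {W X T : Total L} (f : W ⟶ T) (g : X ⟶ T) :
    coprodInl L ε hε₁ W X ≫ coprodDesc L ε hε₂ f g = f := by
  refine Total.Hom.ext' _ _ (coprod.inl_desc _ _) ?_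
  rw [Total.comp_fib]
  simp only [Category.assoc, eqToHom_trans]
  dsimp only [coprodDesc, coprodInl]
  exact eqToHom_comp_map_comp_eqToHom _ _ _ _ _ _ _ (map_inl_ε_map L ε hε₁ _) _ _

theorem coprodInr_coprodDesc {W X T : Total L} (f : W ⟶ T) (g : X ⟶ T) :
    coprodInr L ε hε₁ W X ≫ coprodDesc L ε hε₂ f g = g := by
  refine Total.Hom.ext' _ _ (coprod.inr_desc _ _) ?_
  rw [Total.comp_fib]
  simp only [Category.assoc, eqToHom_trans]
  dsimp only [coprodDesc, coprodInr]
  exact eqToHom_comp_map_comp_eqToHom _ _ _ _ _ _ _ (map_inr_ε_map L ε hε₁ _) _ _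

instance isIso_coprodInl_fib (W X : Total L) : IsIso (coprodInl L ε hε₁ W X).fib :=
  (eqToIso _).isIso_hom

instance isIso_coprodInr_fib (W X : Total L) : IsIso (coprodInr L ε hε₁ W X).fib :=
  (eqToIso _).isIso_hom

theorem coprodObj_hom_ext {W X T : Total L} [(pairing L W.base X.base).Faithful]
    {h k : coprodObj L ε W X ⟶ T}
    (hl : coprodInl L ε hε₁ W X ≫ h = coprodInl L ε hε₁ W X ≫ k)
    (hr : coprodInr L ε hε₁ W X ≫ h = coprodInr L ε hε₁ W X ≫ k) : h = k := by
  obtain ⟨d, u⟩ := h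
  obtain ⟨d', v⟩ := k
  obtain rfl : d = d' := coprod.hom_ext (congrArg Total.Hom.base hl) (congrArg Total.Hom.base hr)
  obtain rfl : u = v := (pairing L W.base X.base).map_injective
    (Prod.ext (Total.map_fib_eq_of_comp_eq _ hl) (Total.map_fib_eq_of_comp_eq _ hr))
  rfl

noncomputable def isColimitCoprodCofan (W X : Total L) :
    IsColimit (BinaryCofan.mk (coprodInl L ε hε₁ W X) (coprodInr L ε hε₁ W X)) :=
  BinaryCofan.IsColimit.mk _ (coprodDesc L ε hε₂) (coprodInl_coprodDesc L ε hε₁ hε₂)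
    (coprodInr_coprodDesc L ε hε₁ hε₂) fun f g _ hl hr =>
      have := Functor.Faithful.of_comp_eq (hε₂ W.base X.base)
      coprodObj_hom_ext L ε hε₁ (hl.trans (coprodInl_coprodDesc L ε hε₁ hε₂ f g).symm)
        (hr.trans (coprodInr_coprodDesc L ε hε₁ hε₂ f g).symm)

end Coproducts

end CHAD

namespace CHAD

variable {C : Type u} [Category.{v} C] [HasInitial C] [HasBinaryCoproducts C]
variable (L : Cᵒᵖ ⥤ Cat.{w₂, w₁}) [∀ X : Cᵒᵖ, HasInitial (L.obj X)]

variable (ε : ∀ W X : C, (↑(L.obj (op W)) × ↑(L.obj (op X))) ⥤ L.obj (op (W ⨿ X)))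

variable (hε₁ : ∀ W X : C, ε W X ⋙ pairing L W X = 𝟭 (↑(L.obj (op W)) × ↑(L.obj (op X))))

theorem total_category_has_finite_coproducts
    (hε₂ : ∀ W X : C, pairing L W X ⋙ ε W X = 𝟭 (L.obj (op (W ⨿ X)))) :
    Nonempty (IsInitial (initObj L)) ∧
    (∀ W X : Total L,
      Nonempty (IsColimit
        (BinaryCofan.mk (coprodInl L ε hε₁ W X) (coprodInr L ε hε₁ W X)))) ∧
    Nonempty (IsInitial ((Total.proj L).obj (initObj L))) ∧
    (∀ W X : Total L,
      Nonempty (IsColimit ((Total.proj L).mapCocone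
        (BinaryCofan.mk (coprodInl L ε hε₁ W X) (coprodInr L ε hε₁ W X))))) := by
  refine ⟨⟨?_⟩, fun W X => ⟨?_⟩, ⟨initialIsInitial⟩, fun W X => ⟨?_⟩⟩
  · exact Total.isInitialMk initialIsInitial initialIsInitial
  · exact isColimitCoprodCofan L ε hε₁ hε₂ W X
  · exact (isColimitMapCoconeBinaryCofanEquiv (Total.proj L) _ _).symm (coprodIsCoprod W.base X.base)

end CHAD
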